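/- Upgrading marginal subgaussianity to conditional subgaussianity: let Z be a real random variable and G a sigma-algebra such that E[e^{λZ} | X] ≤ e^{λ²ν²/2} almost surely for all λ (conditional on another random variable X). Then for every α > 1, Z is αν²-subgaussian conditional on the pair (G, X), i.e., there is no event S ∈ G of positive probability on which the conditional MGF bound E[e^{λZ} | G, X] ≤ e^{αλ²ν²/2} fails for arbitrarily large λ. -/

import Mathlib

open MeasureTheory

set_option maxHeartbeats 1000000

/-- Upgrading marginal subgaussianity to conditional subgaussianity: if
`E[e^{λZ} | m₁] ≤ e^{λ²ν²/2}` a.s. for all `λ` (with `m₁` the σ-algebra generated by `X`),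
then for every `α > 1` there is no event `S` of positive probability, measurable w.r.t. the
finer σ-algebra `m₂` (generated by the pair `(G, X)`), on which the conditional MGF bound
`E[e^{λZ} | m₂] ≤ e^{αλ²ν²/2}` fails for arbitrarily large `λ`. -/
theorem stmt15 {Ω : Type*} (m1 m2 : MeasurableSpace Ω) {mΩ : MeasurableSpace Ω} (μ : Measure Ω) [IsProbabilityMeasure μ]
    (h12 : m1 ≤ m2) (h2 : m2 ≤ mΩ)
    (Z : Ω → ℝ) (hZ : Measurable Z) (ν2 : ℝ) (hν : 0 < ν2)
    (hsub : ∀ lam : ℝ,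
      (μ[fun ω => Real.exp (lam * Z ω) | m1]) ≤ᵐ[μ] fun _ => Real.exp (lam ^ 2 * ν2 / 2)) :
    ∀ α : ℝ, 1 < α →
      ¬ ∃ S : Set Ω, MeasurableSet[m2] S ∧ 0 < μ S ∧
          ∀ C : ℝ, ∃ lam : ℝ, C ≤ |lam| ∧
            (∀ᵐ ω ∂μ, ω ∈ S →
              Real.exp (α * lam ^ 2 * ν2 / 2)
                < (μ[fun ω' => Real.exp (lam * Z ω') | m2]) ω) := by
  intro α hα
  rintro ⟨S, hSm, hS0, hS⟩
  haveI : SigmaFinite (μ.trim h2) := inferInstance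
  haveI : SigmaFinite (μ.trim (h12.trans h2)) := inferInstance
  have hSmeas : MeasurableSet[mΩ] S := h2 _ hSm
  set p := (μ S).toReal with hp_def
  have hp : 0 < p := ENNReal.toReal_pos hS0.ne' (measure_ne_top μ S)
  have hp1 : p ≤ 1 := by
    rw [hp_def]
    simpa using ENNReal.toReal_mono ENNReal.one_ne_top prob_le_one
  have hlogp : 0 ≤ Real.log p⁻¹ := Real.log_nonneg ((one_le_inv₀ hp).2 hp1)
  set C := Real.sqrt (2 * (Real.log p⁻¹ + 1) / ((α - 1) * ν2)) with hC_def
  obtain ⟨lam, hlam, hae⟩ := hS C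
  set f := fun ω => Real.exp (lam * Z ω) with hf_def
  by_cases hf : Integrable f μ
  · have hpos : 0 < (α - 1) * ν2 := by nlinarith
    have hC2 : C ^ 2 = 2 * (Real.log p⁻¹ + 1) / ((α - 1) * ν2) :=
      Real.sq_sqrt (by positivity)
    have hl2 : C ^ 2 ≤ lam ^ 2 := by
      calc C ^ 2 ≤ |lam| ^ 2 := pow_le_pow_left₀ (Real.sqrt_nonneg _) hlam 2
      _ = lam ^ 2 := sq_abs lam
    have hC2mul : (α - 1) * ν2 * C ^ 2 = 2 * (Real.log p⁻¹ + 1) := by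
      rw [hC2]; field_simp; exact mul_div_cancel_left₀ _ (sub_ne_zero.2 hα.ne')
    have key : Real.exp (lam ^ 2 * ν2 / 2) < p * Real.exp (α * lam ^ 2 * ν2 / 2) := by
      rw [← Real.exp_log hp, ← Real.exp_add]
      apply Real.exp_lt_exp.2
      have hli : Real.log p⁻¹ = -Real.log p := Real.log_inv p
      nlinarith [mul_le_mul_of_nonneg_left hl2 hpos.le]
    have hres : ∀ᵐ ω ∂μ.restrict S,
        Real.exp (α * lam ^ 2 * ν2 / 2) ≤ (μ[f|m2]) ω := by
      refine (ae_restrict_iff' hSmeas).2 ?_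
      filter_upwards [hae] with ω h hωS using (h hωS).le
    have hlow : p * Real.exp (α * lam ^ 2 * ν2 / 2) ≤ ∫ ω in S, (μ[f|m2]) ω ∂μ := by
      have := integral_mono_ae (μ := μ.restrict S) (integrable_const _)
        integrable_condExp.restrict hres
      simpa [Measure.restrict_apply_univ, smul_eq_mul, hp_def, measureReal_def] using this
    have heq : ∫ ω in S, (μ[f|m2]) ω ∂μ = ∫ ω in S, f ω ∂μ :=
      setIntegral_condExp h2 hf hSm
    have h3 : ∫ ω in S, f ω ∂μ ≤ ∫ ω, f ω ∂μ := by
      refine integral_mono_measure Measure.restrict_le_self ?_ hf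
      exact ae_of_all _ fun ω => (Real.exp_pos _).le
    have h4 : ∫ ω, f ω ∂μ = ∫ ω, (μ[f|m1]) ω ∂μ :=
      (integral_condExp (h12.trans h2)).symm
    have h5 : ∫ ω, (μ[f|m1]) ω ∂μ ≤ Real.exp (lam ^ 2 * ν2 / 2) := by
      calc ∫ ω, (μ[f|m1]) ω ∂μ
          ≤ ∫ _ω, Real.exp (lam ^ 2 * ν2 / 2) ∂μ :=
            integral_mono_ae integrable_condExp (integrable_const _) (hsub lam)
      _ = Real.exp (lam ^ 2 * ν2 / 2) := by simp
    linarith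
  · have h0 : μ[f|m2] = 0 := condExp_of_not_integrable hf
    have hnm : ∀ᵐ ω ∂μ, ω ∉ S := by
      filter_upwards [hae] with ω h hωS
      have := h hωS
      rw [h0] at this
      exact absurd this (not_lt.2 (Real.exp_pos _).le)
    exact absurd (measure_eq_zero_iff_ae_notMem.mpr hnm) hS0.ne'
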